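/- arXiv:2205.15785 — 5 statements merged into one kernel-verified Lean document; each statement's English description precedes it below -/
import Mathlib

section
/- Let U ⊂ ℂ be open, b : U → ℂ holomorphic and injective, and φ⁺, φ⁻ : U → ℂ holomorphic. For pairwise distinct x_1, ..., x_n ∈ U with x_i + θ ∈ U, define the (possibly complex) weights a_e ∝ ∏_{i<j} (b(x_i + θe_i) − b(x_j + θe_j))/(b(x_i) − b(x_j)) · ∏_i φ⁺(x_i)^{e_i} φ⁻(x_i)^{1−e_i} for e ∈ {0,1}^n, normalized so that ∑_e a_e = 1 (assuming the normalizer is nonzero). Then the function z ↦ ∑_{e ∈ {0,1}^n} a_e [ φ⁺(z) ∏_{j=1}^n (b(z+θ) − b(x_j + θe_j))/(b(z) − b(x_j)) + φ⁻(z) ∏_{j=1}^n (b(z) − b(x_j + θe_j))/(b(z) − b(x_j)) ], which is a priori meromorphic on U with possible simple poles at the points x_i, extends to a holomorphic function on U (all singularities at z = x_i are removable). -/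
/-!
Near `x i` the observable is `N z / (b z - b (x i))` with `N` holomorphic, and `b z - b (x i)` has
a simple zero because an injective holomorphic map has nonvanishing derivative (otherwise
`b - b (x i)` would locally be an `m`-th power, `m ≥ 2`, of a function that is open at `x i`, and
so not injective). The singularity is therefore removable as soon as `N (x i) = 0`. In `N (x i)`
the terms with `e i` true lose their `φ⁺` part and those with `e i` false lose their `φ⁻` part;
flipping `e i` pairs each configuration with one whose remaining term is its negative, because the
weights were built so that changing `e i` from false to true exactly trades the `i`-th row of
factors of the `φ⁺` product for that of the `φ⁻` product.
-/

open Finset Filter Topology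

theorem prod_filter_lt_eq_prod_erase_mul {ι M : Type*} [Fintype ι] [LinearOrder ι] [CommMonoid M]
    (f : ι → ι → M) (hf : ∀ j k, f j k = f k j) (i : ι) :
    ∏ p ∈ univ.filter (fun p : ι × ι => p.1 < p.2), f p.1 p.2 =
      (∏ j ∈ univ.erase i, f i j) *
        ∏ j ∈ univ.erase i, ∏ k ∈ univ.erase i, if j < k then f j k else 1 := by
  have hrow : ∀ j, (∏ k, if j < k then f j k else 1) =
      (if j < i then f j i else 1) * ∏ k ∈ univ.erase i, if j < k then f j k else 1 :=
    fun j => (mul_prod_erase _ _ (mem_univ i)).symm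
  rw [prod_filter, Fintype.prod_prod_type, ← mul_prod_erase _ _ (mem_univ i)]
  simp only [hrow, lt_irrefl, if_false, one_mul, prod_mul_distrib, ← mul_assoc]
  rw [← prod_mul_distrib]
  congr 1
  refine prod_congr rfl fun j hj => ?_
  rcases lt_or_gt_of_ne (ne_of_mem_erase hj) with h | h
  · simp [h, h.not_gt, hf]
  · simp [h, h.not_gt]

section LoopWeights

variable {ι K : Type*} [Fintype ι] [LinearOrder ι] [Field K] (c : Bool → ι → K) (d : ι → K)

/-- With `c t j = b (x j + θ t)`, `d j = b (x j)`, `P j = φ⁺ (x j)`, `M j = φ⁻ (x j)`, this is the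
unnormalized weight of the configuration `e`; `loopObservable` is the bracket of the observable at
`p = φ⁺ z`, `m = φ⁻ z`, `u = b (z + θ)`, `v = b z`. -/
def loopWeight (P M : ι → K) (e : ι → Bool) : K :=
  (∏ p ∈ univ.filter (fun p : ι × ι => p.1 < p.2),
      (c (e p.1) p.1 - c (e p.2) p.2) / (d p.1 - d p.2)) *
    ∏ k, if e k then P k else M k

def loopObservable (p m u v : K) (e : ι → Bool) : K :=
  p * ∏ j, (u - c (e j) j) / (v - d j) + m * ∏ j, (v - c (e j) j) / (v - d j)

def loopNumerator (i : ι) (p m u v : K) (e : ι → Bool) : K :=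
  p * ((u - c (e i) i) * ∏ j ∈ univ.erase i, (u - c (e j) j) / (v - d j)) +
    m * ((v - c (e i) i) * ∏ j ∈ univ.erase i, (v - c (e j) j) / (v - d j))

theorem loopObservable_eq_loopNumerator_div (i : ι) (p m u v : K) (e : ι → Bool) :
    loopObservable c d p m u v e = loopNumerator c d i p m u v e / (v - d i) := by
  simp only [loopObservable, loopNumerator, ← mul_prod_erase univ _ (mem_univ i)]
  ring

variable {c d}

theorem loopWeight_mul_prod_erase_eq {P M : ι → K} {i : ι} {e₀ e₁ : ι → Bool}
    (h₀ : e₀ i = false) (h₁ : e₁ i = true) (h : ∀ j ≠ i, e₀ j = e₁ j) :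
    loopWeight c d P M e₀ * (P i * ∏ j ∈ univ.erase i, (c true i - c (e₀ j) j) / (d i - d j)) =
      loopWeight c d P M e₁ *
        (M i * ∏ j ∈ univ.erase i, (c false i - c (e₀ j) j) / (d i - d j)) := by
  have hsymm : ∀ e : ι → Bool, ∀ j k, (c (e j) j - c (e k) k) / (d j - d k) =
      (c (e k) k - c (e j) j) / (d k - d j) :=
    fun e j k => by rw [← neg_div_neg_eq, neg_sub, neg_sub]
  have hrest : ∀ j ∈ univ.erase i, ∏ k ∈ univ.erase i,
      (if j < k then (c (e₀ j) j - c (e₀ k) k) / (d j - d k) else 1) =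
      ∏ k ∈ univ.erase i, (if j < k then (c (e₁ j) j - c (e₁ k) k) / (d j - d k) else 1) :=
    fun j hj => prod_congr rfl fun k hk => by
      rw [h j (ne_of_mem_erase hj), h k (ne_of_mem_erase hk)]
  have hrow : ∀ t, ∏ j ∈ univ.erase i, (c t i - c (e₁ j) j) / (d i - d j) =
      ∏ j ∈ univ.erase i, (c t i - c (e₀ j) j) / (d i - d j) :=
    fun t => prod_congr rfl fun j hj => by rw [h j (ne_of_mem_erase hj)]
  have hsign : ∀ e : ι → Bool, (∏ k, if e k then P k else M k) =
      (if e i then P i else M i) * ∏ k ∈ univ.erase i, if e k then P k else M k :=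
    fun e => (mul_prod_erase _ _ (mem_univ i)).symm
  have hsign' : ∏ k ∈ univ.erase i, (if e₀ k then P k else M k) =
      ∏ k ∈ univ.erase i, if e₁ k then P k else M k :=
    prod_congr rfl fun k hk => by rw [h k (ne_of_mem_erase hk)]
  simp only [loopWeight, prod_filter_lt_eq_prod_erase_mul _ (hsymm _) i, hsign, h₀, h₁,
    prod_congr rfl hrest, hrow, hsign', Bool.false_eq_true, if_false, if_true]
  ring

theorem loopWeight_mul_loopNumerator_add_eq_zero {P M : ι → K} {i : ι} (hcd : c false i = d i)
    {e₀ e₁ : ι → Bool} (h₀ : e₀ i = false) (h₁ : e₁ i = true) (h : ∀ j ≠ i, e₀ j = e₁ j) :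
    loopWeight c d P M e₀ * loopNumerator c d i (P i) (M i) (c true i) (d i) e₀ +
      loopWeight c d P M e₁ * loopNumerator c d i (P i) (M i) (c true i) (d i) e₁ = 0 := by
  have hrow : ∏ j ∈ univ.erase i, (d i - c (e₁ j) j) / (d i - d j) =
      ∏ j ∈ univ.erase i, (c false i - c (e₀ j) j) / (d i - d j) :=
    prod_congr rfl fun j hj => by rw [hcd, h j (ne_of_mem_erase hj)]
  have hcd' : d i - c false i = 0 := by rw [hcd, sub_self]
  simp only [loopNumerator, h₀, h₁, hrow, hcd', sub_self, zero_mul, mul_zero, add_zero, zero_add]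
  linear_combination (c true i - c false i) *
    loopWeight_mul_prod_erase_eq (c := c) (d := d) (P := P) (M := M) h₀ h₁ h -
    loopWeight c d P M e₁ * M i * (∏ j ∈ univ.erase i, (c false i - c (e₀ j) j) / (d i - d j)) * hcd

theorem sum_loopWeight_mul_loopNumerator_eq_zero (P M : ι → K) (i : ι) (hcd : c false i = d i) :
    ∑ e, loopWeight c d P M e * loopNumerator c d i (P i) (M i) (c true i) (d i) e = 0 := by
  let flip : (ι → Bool) → ι → Bool := fun e => Function.update e i (!e i)
  have hflip : ∀ e, ∀ j ≠ i, e j = flip e j := fun e j hj => (Function.update_of_ne hj _ _).symm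
  refine sum_involution (fun e _ => flip e) (fun e _ => ?_) (fun e _ _ h => ?_) (by simp)
    (fun e _ => by simp [flip])
  · cases he : e i
    · exact loopWeight_mul_loopNumerator_add_eq_zero hcd he (by simp [flip, he]) (hflip e)
    · rw [add_comm]
      exact loopWeight_mul_loopNumerator_add_eq_zero hcd (by simp [flip, he]) he
        (fun j hj => (hflip e j hj).symm)
  · simpa [flip] using congrFun h i

end LoopWeights

theorem AnalyticAt.exists_eventuallyEq_pow {f : ℂ → ℂ} {x₀ : ℂ} {m : ℕ} (hf : AnalyticAt ℂ f x₀)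
    (hm : m ≠ 0) (hord : analyticOrderAt f x₀ = m) :
    ∃ ψ : ℂ → ℂ, AnalyticAt ℂ ψ x₀ ∧ ψ x₀ = 0 ∧ f =ᶠ[𝓝 x₀] fun z => ψ z ^ m := by
  obtain ⟨g, hg, hg0, hfg⟩ := hf.analyticOrderAt_eq_natCast.1 hord
  -- `g / g x₀` takes values near `1`, where the principal `m`-th root is analytic
  refine ⟨fun z => (z - x₀) * (g x₀ ^ (m⁻¹ : ℂ) * (g z / g x₀) ^ (m⁻¹ : ℂ)), ?_, by simp, ?_⟩
  · have h1 : g x₀ / g x₀ ∈ Complex.slitPlane := by simp [hg0]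
    exact (analyticAt_id.sub analyticAt_const).mul
      (analyticAt_const.mul ((hg.div_const).cpow analyticAt_const h1))
  · filter_upwards [hfg] with z hz
    rw [hz, smul_eq_mul, mul_pow, mul_pow, Complex.cpow_nat_inv_pow _ hm,
      Complex.cpow_nat_inv_pow _ hm, mul_div_cancel₀ _ hg0]

theorem AnalyticAt.not_injOn_pow {ψ : ℂ → ℂ} {x₀ : ℂ} {m : ℕ} (hψ : AnalyticAt ℂ ψ x₀)
    (hψ0 : ψ x₀ = 0) (hne : ¬ ∀ᶠ z in 𝓝 x₀, ψ z = 0) (hm : 2 ≤ m) {V : Set ℂ} (hV : V ∈ 𝓝 x₀) :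
    ¬ Set.InjOn (fun z => ψ z ^ m) V := by
  intro hinj
  obtain ⟨ω, hω⟩ : ∃ ω : ℂ, IsPrimitiveRoot ω m := ⟨_, Complex.isPrimitiveRoot_exp m (by omega)⟩
  have hmap : 𝓝 0 ≤ map ψ (𝓝 x₀) := by
    simpa only [hψ0] using hψ.eventually_constant_or_nhds_le_map_nhds.resolve_left
      (by simpa only [hψ0] using hne)
  have himage : ψ '' V ∈ 𝓝 0 :=
    hmap (mem_map.2 (mem_of_superset hV (Set.subset_preimage_image ψ V)))
  have hrot : Tendsto (fun w => ω * w) (𝓝 0) (𝓝 0) := by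
    simpa using (continuous_const_mul ω).tendsto 0
  obtain ⟨w, ⟨⟨z₁, hz₁, rfl⟩, z₂, hz₂, hωw⟩, hw⟩ := nonempty_of_mem <| inter_mem
    (mem_nhdsWithin_of_mem_nhds (inter_mem himage (hrot himage)))
    (self_mem_nhdsWithin : {0}ᶜ ∈ 𝓝[≠] (0 : ℂ))
  have heq : z₂ = z₁ := hinj hz₂ hz₁ (by simp only [hωw, mul_pow, hω.pow_eq_one, one_mul])
  have : (ω - 1) * ψ z₁ = 0 := by rw [sub_one_mul, ← show ψ z₂ = ω * ψ z₁ from hωw, heq, sub_self]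
  exact (mul_ne_zero (sub_ne_zero.2 (hω.ne_one (by omega))) hw) this

theorem deriv_ne_zero_of_injOn {U : Set ℂ} (hU : IsOpen U) {b : ℂ → ℂ}
    (hb : DifferentiableOn ℂ b U) (hbinj : Set.InjOn b U) {x₀ : ℂ} (hx₀ : x₀ ∈ U) :
    deriv b x₀ ≠ 0 := by
  intro hderiv
  have hba : AnalyticAt ℂ b x₀ := hb.analyticAt (hU.mem_nhds hx₀)
  have hnconst : ¬ ∀ᶠ z in 𝓝 x₀, b z - b x₀ = 0 := fun h => by
    obtain ⟨z, ⟨hz, hzU⟩, hzx⟩ :=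
      ((h.and (hU.eventually_mem hx₀)).filter_mono nhdsWithin_le_nhds |>.and
        self_mem_nhdsWithin).exists (f := 𝓝[≠] x₀)
    exact hzx (hbinj hzU hx₀ (sub_eq_zero.1 hz))
  have hord : 2 ≤ analyticOrderAt (fun z => b z - b x₀) x₀ := by
    rw [← hba.analyticOrderAt_deriv_add_one, ← one_add_one_eq_two]
    gcongr
    exact Order.one_le_iff_ne_zero.2 (hba.deriv.analyticOrderAt_ne_zero.2 hderiv)
  obtain ⟨m, hm⟩ := ENat.ne_top_iff_exists.1 (mt analyticOrderAt_eq_top.1 hnconst)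
  have hm2 : 2 ≤ m := by exact_mod_cast hm ▸ hord
  obtain ⟨ψ, hψ, hψ0, hbψ⟩ := AnalyticAt.exists_eventuallyEq_pow (f := fun z => b z - b x₀)
    (hba.sub analyticAt_const) (by omega) hm.symm
  refine hψ.not_injOn_pow hψ0 (fun h => hnconst ?_) hm2 (inter_mem (hU.mem_nhds hx₀) hbψ)
    fun z₁ hz₁ z₂ hz₂ h12 => hbinj hz₁.1 hz₂.1 (sub_left_inj.1 (hz₁.2.trans (h12.trans hz₂.2.symm)))
  filter_upwards [hbψ, h] with z hz hz0
  rw [hz, hz0, zero_pow (by omega)]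

theorem exists_eventuallyEq_div_sub_of_deriv_ne_zero {N b : ℂ → ℂ} {x₀ : ℂ}
    (hN : ∀ᶠ z in 𝓝 x₀, DifferentiableAt ℂ N z) (hb : ∀ᶠ z in 𝓝 x₀, DifferentiableAt ℂ b z)
    (hN0 : N x₀ = 0) (hb' : deriv b x₀ ≠ 0) :
    ∃ g : ℂ → ℂ, (∀ᶠ z in 𝓝 x₀, DifferentiableAt ℂ g z) ∧
      (fun z => N z / (b z - b x₀)) =ᶠ[𝓝[≠] x₀] g := by
  obtain ⟨V, hV, hVo, hxV⟩ := eventually_nhds_iff.1 (hN.and hb)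
  have hdiff : ∀ {f : ℂ → ℂ}, (∀ z ∈ V, DifferentiableAt ℂ f z) →
      DifferentiableOn ℂ (dslope f x₀) V := fun hf =>
    (Complex.differentiableOn_dslope (hVo.mem_nhds hxV)).2 fun z hz =>
      (hf z hz).differentiableWithinAt
  have hdN := hdiff fun z hz => (hV z hz).1
  have hdb := hdiff fun z hz => (hV z hz).2
  have hdb0 : ∀ᶠ z in 𝓝 x₀, dslope b x₀ z ≠ 0 :=
    (hdb.continuousOn.continuousAt (hVo.mem_nhds hxV)).eventually_ne (by rwa [dslope_same])
  refine ⟨fun z => dslope N x₀ z / dslope b x₀ z, ?_, ?_⟩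
  · filter_upwards [hVo.mem_nhds hxV, hdb0] with z hz hz0
    exact (hdN.differentiableAt (hVo.mem_nhds hz)).div (hdb.differentiableAt (hVo.mem_nhds hz)) hz0
  · filter_upwards [self_mem_nhdsWithin] with z hz
    rw [dslope_of_ne _ hz, dslope_of_ne _ hz, slope_def_field, slope_def_field, hN0, sub_zero,
      div_div_div_cancel_right₀ (sub_ne_zero.2 hz)]

theorem eventually_limUnder_nhdsNE_eq {X Y : Type*} [TopologicalSpace X] [T1Space X]
    [∀ x : X, (𝓝[≠] x).NeBot] [TopologicalSpace Y] [T2Space Y] [Nonempty Y] {G g : X → Y} {x₀ : X}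
    (hg : ∀ᶠ x in 𝓝 x₀, ContinuousAt g x) (hGg : G =ᶠ[𝓝[≠] x₀] g) :
    ∀ᶠ x in 𝓝 x₀, limUnder (𝓝[≠] x) G = g x := by
  have hloc : ∀ᶠ x in 𝓝 x₀, G =ᶠ[𝓝[≠] x] g := by
    rw [← nhdsNE_sup_pure, eventually_sup]
    exact ⟨(eventually_nhdsNE_eventually_nhds_iff.2 hGg).mono fun _ h => h.filter_mono
      nhdsWithin_le_nhds, hGg⟩
  filter_upwards [hloc, hg] with x hGx hgx
  exact ((hgx.tendsto.mono_left nhdsWithin_le_nhds).congr' hGx.symm).limUnder_eq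

theorem exists_differentiableOn_eq_of_eventuallyEq_nhdsNE {E : Type*} [NormedAddCommGroup E]
    [NormedSpace ℂ E] {G : ℂ → E} {U : Set ℂ}
    (h : ∀ z ∈ U, ∃ g : ℂ → E, (∀ᶠ y in 𝓝 z, DifferentiableAt ℂ g y) ∧ G =ᶠ[𝓝[≠] z] g) :
    ∃ F : ℂ → E, DifferentiableOn ℂ F U ∧ ∀ z, ContinuousAt G z → F z = G z := by
  refine ⟨fun z => limUnder (𝓝[≠] z) G, fun z hz => ?_, fun z hGz =>
    (hGz.tendsto.mono_left nhdsWithin_le_nhds).limUnder_eq⟩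
  obtain ⟨g, hg, hGg⟩ := h z hz
  exact (hg.self_of_nhds.congr_of_eventuallyEq
    (eventually_limUnder_nhdsNE_eq (hg.mono fun _ h => h.continuousAt) hGg)).differentiableWithinAt

section LoopObservable

variable {ι : Type*} [Fintype ι] [LinearOrder ι] {c : Bool → ι → ℂ} {d : ι → ℂ}
  {p m u v : ℂ → ℂ} {z : ℂ}

theorem eventually_differentiableAt_sum_loopObservable (a : (ι → Bool) → ℂ)
    (hp : ∀ᶠ y in 𝓝 z, DifferentiableAt ℂ p y) (hm : ∀ᶠ y in 𝓝 z, DifferentiableAt ℂ m y)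
    (hu : ∀ᶠ y in 𝓝 z, DifferentiableAt ℂ u y) (hv : ∀ᶠ y in 𝓝 z, DifferentiableAt ℂ v y)
    (hvd : ∀ j, v z ≠ d j) :
    ∀ᶠ y in 𝓝 z, DifferentiableAt ℂ
      (fun y => ∑ e, a e * loopObservable c d (p y) (m y) (u y) (v y) e) y := by
  have hne : ∀ᶠ y in 𝓝 z, ∀ j, v y - d j ≠ 0 := eventually_all.2 fun j =>
    (hv.self_of_nhds.continuousAt.eventually_ne (hvd j)).mono fun _ => sub_ne_zero.2
  filter_upwards [hp, hm, hu, hv, hne] with y hpy hmy huy hvy hney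
  unfold loopObservable
  fun_prop (disch := exact hney _)

theorem eventually_differentiableAt_sum_loopNumerator (a : (ι → Bool) → ℂ) (i : ι)
    (hp : ∀ᶠ y in 𝓝 z, DifferentiableAt ℂ p y) (hm : ∀ᶠ y in 𝓝 z, DifferentiableAt ℂ m y)
    (hu : ∀ᶠ y in 𝓝 z, DifferentiableAt ℂ u y) (hv : ∀ᶠ y in 𝓝 z, DifferentiableAt ℂ v y)
    (hvd : ∀ j ≠ i, v z ≠ d j) :
    ∀ᶠ y in 𝓝 z, DifferentiableAt ℂ
      (fun y => ∑ e, a e * loopNumerator c d i (p y) (m y) (u y) (v y) e) y := by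
  have hne : ∀ᶠ y in 𝓝 z, ∀ j ∈ univ.erase i, v y - d j ≠ 0 := (eventually_all_finset _).2
    fun j hj => (hv.self_of_nhds.continuousAt.eventually_ne (hvd j (ne_of_mem_erase hj))).mono
      fun _ => sub_ne_zero.2
  filter_upwards [hp, hm, hu, hv, hne] with y hpy hmy huy hvy hney
  unfold loopNumerator
  fun_prop (disch := exact hney _ ‹_›)

theorem exists_eventuallyEq_sum_loopObservable_nhdsNE (a : (ι → Bool) → ℂ) (i : ι)
    (hp : ∀ᶠ y in 𝓝 z, DifferentiableAt ℂ p y) (hm : ∀ᶠ y in 𝓝 z, DifferentiableAt ℂ m y)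
    (hu : ∀ᶠ y in 𝓝 z, DifferentiableAt ℂ u y) (hv : ∀ᶠ y in 𝓝 z, DifferentiableAt ℂ v y)
    (hv' : deriv v z ≠ 0) (hvd : ∀ j ≠ i, v z ≠ d j) (hvi : v z = d i)
    (hres : ∑ e, a e * loopNumerator c d i (p z) (m z) (u z) (v z) e = 0) :
    ∃ g : ℂ → ℂ, (∀ᶠ y in 𝓝 z, DifferentiableAt ℂ g y) ∧
      (fun y => ∑ e, a e * loopObservable c d (p y) (m y) (u y) (v y) e) =ᶠ[𝓝[≠] z] g := by
  obtain ⟨g, hg, hNg⟩ := exists_eventuallyEq_div_sub_of_deriv_ne_zero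
    (eventually_differentiableAt_sum_loopNumerator a i hp hm hu hv hvd) hv hres hv'
  refine ⟨g, hg, (EventuallyEq.of_eq (funext fun y => ?_)).trans hNg⟩
  simp only [loopObservable_eq_loopNumerator_div c d i, hvi, sum_div, mul_div_assoc]

end LoopObservable

theorem dynamical_loop_equation_general (U : Set ℂ) (hU : IsOpen U) (θ : ℝ)
    (hUθ : ∀ z ∈ U, z + (θ : ℂ) ∈ U)
    (b φp φm : ℂ → ℂ)
    (hb : DifferentiableOn ℂ b U) (hbinj : Set.InjOn b U)
    (hφp : DifferentiableOn ℂ φp U) (hφm : DifferentiableOn ℂ φm U)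
    (n : ℕ) (x : Fin n → ℂ) (hxU : ∀ i, x i ∈ U)
    (hxd : ∀ i j, i ≠ j → x i ≠ x j)
    (w : (Fin n → Bool) → ℂ)
    (hw : ∀ e, w e =
      (∏ p ∈ univ.filter (fun p : Fin n × Fin n => p.1 < p.2),
          (b (x p.1 + (θ : ℂ) * (if e p.1 then 1 else 0)) -
              b (x p.2 + (θ : ℂ) * (if e p.2 then 1 else 0))) /
            (b (x p.1) - b (x p.2))) *
        ∏ k : Fin n, (if e k then φp (x k) else φm (x k))) :
    ∃ F : ℂ → ℂ, DifferentiableOn ℂ F U ∧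
      ∀ z ∈ U, (∀ i, z ≠ x i) →
        F z = ∑ e : Fin n → Bool,
          (w e / ∑ e' : Fin n → Bool, w e') *
            (φp z * (∏ j : Fin n,
                (b (z + (θ : ℂ)) - b (x j + (θ : ℂ) * (if e j then 1 else 0))) /
                  (b z - b (x j))) +
              φm z * (∏ j : Fin n,
                (b z - b (x j + (θ : ℂ) * (if e j then 1 else 0))) /
                  (b z - b (x j)))) := by
  let c : Bool → Fin n → ℂ := fun t j => b (x j + (θ : ℂ) * if t then 1 else 0)
  let d : Fin n → ℂ := fun j => b (x j)
  have hw' : ∀ e, w e = loopWeight c d (fun k => φp (x k)) (fun k => φm (x k)) e := hw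
  let a : (Fin n → Bool) → ℂ := fun e => w e / ∑ e', w e'
  let G : ℂ → ℂ := fun z => ∑ e, a e * loopObservable c d (φp z) (φm z) (b (z + θ)) (b z) e
  have hev : ∀ {f : ℂ → ℂ}, DifferentiableOn ℂ f U → ∀ {z}, z ∈ U →
      ∀ᶠ y in 𝓝 z, DifferentiableAt ℂ f y :=
    fun hf _ hz => hf.eventually_differentiableAt (hU.mem_nhds hz)
  have hbθ : DifferentiableOn ℂ (fun z => b (z + θ)) U :=
    hb.comp (differentiableOn_id.add_const _) hUθ
  have hG : ∀ z ∈ U, (∀ i, z ≠ x i) → ∀ᶠ y in 𝓝 z, DifferentiableAt ℂ G y := fun z hz hzx =>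
    eventually_differentiableAt_sum_loopObservable a (hev hφp hz) (hev hφm hz) (hev hbθ hz)
      (hev hb hz) fun j h => hzx j (hbinj hz (hxU j) h)
  have hloc : ∀ z ∈ U, ∃ g : ℂ → ℂ, (∀ᶠ y in 𝓝 z, DifferentiableAt ℂ g y) ∧
      G =ᶠ[𝓝[≠] z] g := by
    intro z hz
    by_cases hzx : ∀ i, z ≠ x i
    · exact ⟨G, hG z hz hzx, .rfl⟩
    obtain ⟨i, rfl⟩ := not_forall_not.1 hzx
    refine exists_eventuallyEq_sum_loopObservable_nhdsNE a i (hev hφp hz) (hev hφm hz) (hev hbθ hz)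
      (hev hb hz) (deriv_ne_zero_of_injOn hU hb hbinj hz)
      (fun j hj h => hxd i j hj.symm (hbinj hz (hxU j) h)) rfl ?_
    have hct : b (x i + θ) = c true i := by simp [c]
    simp only [hct, a, div_mul_eq_mul_div, ← sum_div, hw']
    exact div_eq_zero_iff.2 (.inl (sum_loopWeight_mul_loopNumerator_eq_zero _ _ i (by simp [c, d])))
  obtain ⟨F, hF, hFG⟩ := exists_differentiableOn_eq_of_eventuallyEq_nhdsNE hloc
  exact ⟨F, hF, fun z hz hzx => hFG z (hG z hz hzx).self_of_nhds.continuousAt⟩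

/-- the dynamical loop equation.  With normalized (possibly complex)
weights `a_e = w e / ∑ w`, the observable
`z ↦ ∑_e a_e [φ⁺(z) ∏_j (b(z+θ)-b(x_j+θe_j))/(b(z)-b(x_j))
             + φ⁻(z) ∏_j (b(z)-b(x_j+θe_j))/(b(z)-b(x_j))]`,
a priori defined away from the points `x_i`, extends to a holomorphic function on `U`. -/
theorem dynamical_loop_equation (U : Set ℂ) (hU : IsOpen U) (θ : ℝ) (hθ : 0 < θ)
    (hUθ : ∀ z ∈ U, z + (θ : ℂ) ∈ U)
    (b φp φm : ℂ → ℂ)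
    (hb : DifferentiableOn ℂ b U) (hbinj : Set.InjOn b U)
    (hφp : DifferentiableOn ℂ φp U) (hφm : DifferentiableOn ℂ φm U)
    (n : ℕ) (x : Fin n → ℂ) (hxU : ∀ i, x i ∈ U)
    (hxd : ∀ i j, i ≠ j → x i ≠ x j)
    (w : (Fin n → Bool) → ℂ)
    (hw : ∀ e, w e =
      (∏ p ∈ univ.filter (fun p : Fin n × Fin n => p.1 < p.2),
          (b (x p.1 + (θ : ℂ) * (if e p.1 then 1 else 0)) -
              b (x p.2 + (θ : ℂ) * (if e p.2 then 1 else 0))) /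
            (b (x p.1) - b (x p.2))) *
        ∏ k : Fin n, (if e k then φp (x k) else φm (x k)))
    (hZ : (∑ e : Fin n → Bool, w e) ≠ 0) :
    ∃ F : ℂ → ℂ, DifferentiableOn ℂ F U ∧
      ∀ z ∈ U, (∀ i, z ≠ x i) →
        F z = ∑ e : Fin n → Bool,
          (w e / ∑ e' : Fin n → Bool, w e') *
            (φp z * (∏ j : Fin n,
                (b (z + (θ : ℂ)) - b (x j + (θ : ℂ) * (if e j then 1 else 0))) /
                  (b z - b (x j))) +
              φm z * (∏ j : Fin n,
                (b z - b (x j + (θ : ℂ) * (if e j then 1 else 0))) /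
                  (b z - b (x j)))) :=
  dynamical_loop_equation_general U hU θ hUθ b φp φm hb hbinj hφp hφm n x hxU hxd w hw
end

section
/- Let θ > 0, n ≥ 1, and x_1 > x_2 > ... > x_{n+1} be points of the θ-shifted lattice (x_i − x_{i+1} ∈ θ + ℤ_{≥0}). Let L(x) = ∪_{i=1}^n {x_{i+1}+θ, x_{i+1}+θ+1, ..., x_i} be the lattice of holes' positions, and let b be an injective function on a set containing L(x) ∪ {x_1,...,x_{n+1}}. Write x' for the complement L(x)∖{x_1,...,x_n} listed in decreasing order. Then ∏_{i<j} (b(x'_i) − b(x'_j)) = [∏_{i<j} (b(x_i) − b(x_j)) · ∏_{ℓ>ℓ', ℓ,ℓ'∈L(x)} (b(ℓ) − b(ℓ'))] / [∏_i ( ∏_{ℓ∈L(x), ℓ>x_i} (b(ℓ) − b(x_i)) · ∏_{ℓ∈L(x), ℓ<x_i} (b(x_i) − b(ℓ)) )]. -/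
open Finset

/-- The lattice `L(x) = ∪_{i=1}^n {x_{i+1}+θ, x_{i+1}+θ+1, ..., x_i}` of a particle
configuration `x ∈ 𝕎_θ^{n+1}` whose gaps are `x_i − x_{i+1} = θ + m_i`. -/
noncomputable def latticeL (n : ℕ) (θ : ℝ) (x : Fin (n + 1) → ℝ) (m : Fin n → ℕ) :
    Finset ℝ :=
  Finset.univ.biUnion fun i : Fin n =>
    (Finset.range (m i + 1)).image fun k : ℕ => x i.succ + θ + (k : ℝ)

/-- `∏_{u > v, u,v ∈ S} (b(u) − b(v))`: the Vandermonde-type product over the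
decreasing listing of a finite set `S` of reals. -/
noncomputable def pairProd (b : ℝ → ℂ) (S : Finset ℝ) : ℂ :=
  ∏ p ∈ (S ×ˢ S).filter (fun p : ℝ × ℝ => p.2 < p.1), (b p.1 - b p.2)

lemma group_left (f : ℝ → ℝ → ℂ) (P : ℝ → ℝ → Prop) [∀ a c, Decidable (P a c)]
    (s t : Finset ℝ) :
    ∏ p ∈ (s ×ˢ t).filter (fun p => P p.1 p.2), f p.1 p.2
      = ∏ a ∈ s, ∏ c ∈ t.filter (P a), f a c := by
  rw [Finset.prod_filter, Finset.prod_product]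
  simp [Finset.prod_filter]

lemma group_right (f : ℝ → ℝ → ℂ) (P : ℝ → ℝ → Prop) [∀ a c, Decidable (P a c)]
    (s t : Finset ℝ) :
    ∏ p ∈ (s ×ˢ t).filter (fun p => P p.1 p.2), f p.1 p.2
      = ∏ c ∈ t, ∏ a ∈ s.filter (fun a => P a c), f a c := by
  rw [Finset.prod_filter, Finset.prod_product_right]
  simp [Finset.prod_filter]

lemma pairProd_union (b : ℝ → ℂ) (A C : Finset ℝ) (h : Disjoint A C) :
    pairProd b (A ∪ C) = pairProd b A * pairProd b C
      * (∏ p ∈ (A ×ˢ C).filter (fun p : ℝ × ℝ => p.2 < p.1), (b p.1 - b p.2))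
      * (∏ p ∈ (C ×ˢ A).filter (fun p : ℝ × ℝ => p.2 < p.1), (b p.1 - b p.2)) := by
  classical
  set P : ℝ × ℝ → Prop := fun p => p.2 < p.1 with hP
  have d1 : Disjoint ((A ×ˢ A).filter P) ((A ×ˢ C).filter P) :=
    Finset.disjoint_filter_filter (Finset.disjoint_product.2 (Or.inr h))
  have d2 : Disjoint ((C ×ˢ A).filter P) ((C ×ˢ C).filter P) :=
    Finset.disjoint_filter_filter (Finset.disjoint_product.2 (Or.inr h))
  have dbig : Disjoint (A ×ˢ (A ∪ C)) (C ×ˢ (A ∪ C)) :=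
    Finset.disjoint_product.2 (Or.inl h)
  have d3 : Disjoint ((A ×ˢ A).filter P ∪ (A ×ˢ C).filter P)
      ((C ×ˢ A).filter P ∪ (C ×ˢ C).filter P) := by
    refine dbig.mono ?_ ?_ <;>
    · rw [← Finset.filter_union, ← Finset.product_union]
      exact Finset.filter_subset _ _
  unfold pairProd
  rw [Finset.union_product, Finset.product_union, Finset.product_union,
    Finset.filter_union, Finset.filter_union, Finset.filter_union,
    Finset.prod_union d3, Finset.prod_union d1, Finset.prod_union d2]
  ring

lemma key (b : ℝ → ℂ) (S A : Finset ℝ) (hA : A ⊆ S) (hinj : Set.InjOn b S) :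
    pairProd b (S \ A) = pairProd b A * pairProd b S
      / ∏ a ∈ A, ((∏ ℓ ∈ S.filter (fun ℓ => a < ℓ), (b ℓ - b a))
          * (∏ ℓ ∈ S.filter (fun ℓ => ℓ < a), (b a - b ℓ))) := by
  classical
  set C := S \ A with hC
  have hdisj : Disjoint A C := Finset.disjoint_sdiff
  have hSU : S = A ∪ C := by
    rw [hC, Finset.union_sdiff_of_subset hA]
  -- nonzero facts
  have hne : ∀ u ∈ S, ∀ v ∈ S, v < u → b u - b v ≠ 0 := by
    intro u hu v hv hlt
    exact sub_ne_zero_of_ne (fun e => absurd (hinj hu hv e) (ne_of_gt hlt))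
  -- cross products
  set cr1 := ∏ p ∈ (C ×ˢ A).filter (fun p : ℝ × ℝ => p.2 < p.1), (b p.1 - b p.2) with hcr1
  set cr2 := ∏ p ∈ (A ×ˢ C).filter (fun p : ℝ × ℝ => p.2 < p.1), (b p.1 - b p.2) with hcr2
  have hsplit : pairProd b S = pairProd b A * pairProd b C * cr2 * cr1 := by
    rw [hSU]; exact pairProd_union b A C hdisj
  -- denominator rearrangement
  have hfilter1 : ∀ a : ℝ, S.filter (fun ℓ => a < ℓ)
      = A.filter (fun ℓ => a < ℓ) ∪ C.filter (fun ℓ => a < ℓ) := by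
    intro a; rw [hSU, Finset.filter_union]
  have hfilter2 : ∀ a : ℝ, S.filter (fun ℓ => ℓ < a)
      = A.filter (fun ℓ => ℓ < a) ∪ C.filter (fun ℓ => ℓ < a) := by
    intro a; rw [hSU, Finset.filter_union]
  have hden : ∏ a ∈ A, ((∏ ℓ ∈ S.filter (fun ℓ => a < ℓ), (b ℓ - b a))
      * (∏ ℓ ∈ S.filter (fun ℓ => ℓ < a), (b a - b ℓ)))
      = pairProd b A * pairProd b A * cr1 * cr2 := by
    have e1 : ∀ a ∈ A, (∏ ℓ ∈ S.filter (fun ℓ => a < ℓ), (b ℓ - b a))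
        = (∏ ℓ ∈ A.filter (fun ℓ => a < ℓ), (b ℓ - b a))
          * (∏ ℓ ∈ C.filter (fun ℓ => a < ℓ), (b ℓ - b a)) := by
      intro a _
      rw [hfilter1 a, Finset.prod_union
        (Finset.disjoint_filter_filter hdisj)]
    have e2 : ∀ a ∈ A, (∏ ℓ ∈ S.filter (fun ℓ => ℓ < a), (b a - b ℓ))
        = (∏ ℓ ∈ A.filter (fun ℓ => ℓ < a), (b a - b ℓ))
          * (∏ ℓ ∈ C.filter (fun ℓ => ℓ < a), (b a - b ℓ)) := by
      intro a _
      rw [hfilter2 a, Finset.prod_union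
        (Finset.disjoint_filter_filter hdisj)]
    calc ∏ a ∈ A, ((∏ ℓ ∈ S.filter (fun ℓ => a < ℓ), (b ℓ - b a))
          * (∏ ℓ ∈ S.filter (fun ℓ => ℓ < a), (b a - b ℓ)))
        = ∏ a ∈ A, (((∏ ℓ ∈ A.filter (fun ℓ => a < ℓ), (b ℓ - b a))
            * (∏ ℓ ∈ C.filter (fun ℓ => a < ℓ), (b ℓ - b a)))
          * ((∏ ℓ ∈ A.filter (fun ℓ => ℓ < a), (b a - b ℓ))
            * (∏ ℓ ∈ C.filter (fun ℓ => ℓ < a), (b a - b ℓ)))) := by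
          exact Finset.prod_congr rfl (fun a ha => by rw [e1 a ha, e2 a ha])
      _ = (∏ a ∈ A, ∏ ℓ ∈ A.filter (fun ℓ => a < ℓ), (b ℓ - b a))
          * (∏ a ∈ A, ∏ ℓ ∈ C.filter (fun ℓ => a < ℓ), (b ℓ - b a))
          * ((∏ a ∈ A, ∏ ℓ ∈ A.filter (fun ℓ => ℓ < a), (b a - b ℓ))
          * (∏ a ∈ A, ∏ ℓ ∈ C.filter (fun ℓ => ℓ < a), (b a - b ℓ))) := by
          rw [← Finset.prod_mul_distrib, ← Finset.prod_mul_distrib,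
            ← Finset.prod_mul_distrib]
      _ = pairProd b A * pairProd b A * cr1 * cr2 := by
          have gA1 : pairProd b A
              = ∏ a ∈ A, ∏ ℓ ∈ A.filter (fun ℓ => a < ℓ), (b ℓ - b a) := by
            unfold pairProd
            exact group_right (fun u v => b u - b v) (fun u v => v < u) A A
          have gA2 : pairProd b A
              = ∏ a ∈ A, ∏ ℓ ∈ A.filter (fun ℓ => ℓ < a), (b a - b ℓ) := by
            unfold pairProd
            exact group_left (fun u v => b u - b v) (fun u v => v < u) A A
          have gc1 : cr1
              = ∏ a ∈ A, ∏ ℓ ∈ C.filter (fun ℓ => a < ℓ), (b ℓ - b a) := by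
            rw [hcr1]
            exact group_right (fun u v => b u - b v) (fun u v => v < u) C A
          have gc2 : cr2
              = ∏ a ∈ A, ∏ ℓ ∈ C.filter (fun ℓ => ℓ < a), (b a - b ℓ) := by
            rw [hcr2]
            exact group_left (fun u v => b u - b v) (fun u v => v < u) A C
          rw [← gA1, ← gA2, ← gc1, ← gc2]
          ring
  -- nonvanishing of pieces
  have hAne : pairProd b A ≠ 0 := by
    unfold pairProd
    refine Finset.prod_ne_zero_iff.2 fun p hp => ?_
    simp only [Finset.mem_filter, Finset.mem_product] at hp
    exact hne p.1 (hA hp.1.1) p.2 (hA hp.1.2) hp.2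
  have hcr1ne : cr1 ≠ 0 := by
    rw [hcr1]
    refine Finset.prod_ne_zero_iff.2 fun p hp => ?_
    simp only [Finset.mem_filter, Finset.mem_product] at hp
    exact hne p.1 (hSU ▸ Finset.mem_union_right A hp.1.1) p.2 (hA hp.1.2) hp.2
  have hcr2ne : cr2 ≠ 0 := by
    rw [hcr2]
    refine Finset.prod_ne_zero_iff.2 fun p hp => ?_
    simp only [Finset.mem_filter, Finset.mem_product] at hp
    exact hne p.1 (hA hp.1.1) p.2 (hSU ▸ Finset.mem_union_right A hp.1.2) hp.2
  rw [hden, hsplit]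
  field_simp

/-- the particle–hole duality identity for the Vandermonde-type
product over the hole configuration `x' = L(x) ∖ {x_1, …, x_n}`. -/
theorem particle_hole_duality (n : ℕ) (hn : 1 ≤ n) (θ : ℝ) (hθ : 0 < θ)
    (x : Fin (n + 1) → ℝ) (m : Fin n → ℕ)
    (hx : ∀ i : Fin n, x i.castSucc = x i.succ + θ + (m i : ℝ))
    (b : ℝ → ℂ)
    (hb : Set.InjOn b (↑(latticeL n θ x m) ∪ Set.range x)) :
    pairProd b (latticeL n θ x m \ Finset.univ.image fun i : Fin n => x i.castSucc)
      = pairProd b (Finset.univ.image fun i : Fin n => x i.castSucc)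
          * pairProd b (latticeL n θ x m)
        / ∏ i : Fin n,
            ((∏ ℓ ∈ (latticeL n θ x m).filter (fun ℓ => x i.castSucc < ℓ),
                (b ℓ - b (x i.castSucc))) *
             (∏ ℓ ∈ (latticeL n θ x m).filter (fun ℓ => ℓ < x i.castSucc),
                (b (x i.castSucc) - b ℓ))) := by
  classical
  set S := latticeL n θ x m with hS
  set A := Finset.univ.image fun i : Fin n => x i.castSucc with hAdef
  -- strict antitonicity of x
  have hanti : StrictAnti x := by
    have : StrictMono (fun i => -x i) := by
      rw [Fin.strictMono_iff_lt_succ]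
      intro i
      have := hx i
      simp only [neg_lt_neg_iff]
      rw [this]
      have : (0:ℝ) ≤ (m i : ℝ) := Nat.cast_nonneg _
      linarith
    intro i j hij
    have := this hij
    simpa using this
  have hxinj : Function.Injective fun i : Fin n => x i.castSucc :=
    fun i j h => Fin.castSucc_injective n (hanti.injective h)
  -- A ⊆ S
  have hAS : A ⊆ S := by
    intro a ha
    rw [hAdef, Finset.mem_image] at ha
    obtain ⟨i, _, rfl⟩ := ha
    rw [hS]
    unfold latticeL
    rw [Finset.mem_biUnion]
    refine ⟨i, Finset.mem_univ i, ?_⟩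
    rw [Finset.mem_image]
    exact ⟨m i, Finset.mem_range.2 (Nat.lt_succ_self _), (hx i).symm⟩
  have hinjS : Set.InjOn b ↑S := hb.mono (Set.subset_union_left)
  have := key b S A hAS hinjS
  rw [this]
  congr 1
  rw [hAdef, Finset.prod_image (fun i _ j _ h => hxinj h)]
end

section
/- Let 0 < q, κ ≠ 0, and let (z(t), f(t)) be differentiable complex-valued functions satisfying the characteristic ODE system z'(t) = f(t)/(f(t) − 1) and f'(t) = ln(q) · f(t) · (κ² q^{z(t)−t} + q^{−z(t)})/(κ² q^{z(t)−t} − q^{−z(t)}) on an interval, with f(t) ≠ 1 and κ² q^{z(t)−t} ≠ q^{−z(t)} throughout. Then both U(t) = q^t (f(t) q^{−z(t)} − κ² q^{z(t)−t})/(1 − f(t)) and V(t) = (q^{−z(t)} − f(t) κ² q^{z(t)−t})/(1 − f(t)) are constant (first integrals): U'(t) = 0 and V'(t) = 0. -/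
/-! Write `L = ln q`, `a = κ² q^{z-t}`, `b = q^{-z}` and `D = 1 - f`. Along the flow the
logarithmic derivatives are `a'/a = -L / D`, `b'/b = L f / D` and `(q^t)'/q^t = L`, and
`f' (a - b) = L f (a + b)`. With these, the numerator `N` of either first integral
`N / D` satisfies `N' D = N D'` as a rational identity in `a, b, f`, so the quotient is
stationary. -/

open Complex

theorem HasDerivAt.div_eq_zero_of_mul_eq {N D : ℝ → ℂ} {N' D' : ℂ} {t : ℝ}
    (hN : HasDerivAt N N' t) (hD : HasDerivAt D D' t) (hDt : D t ≠ 0)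
    (h : N' * D t = N t * D') : HasDerivAt (fun τ => N τ / D τ) 0 t := by
  simpa [h] using hN.fun_div hD hDt

section CharacteristicFlow

variable {L κ : ℂ} {z f : ℝ → ℂ} {t : ℝ}

theorem hasDerivAt_ofReal_id (t : ℝ) : HasDerivAt (fun τ : ℝ => (τ : ℂ)) 1 t :=
  (hasDerivAt_id t).ofReal_comp

theorem hasDerivAt_cexp_ofReal_mul (L : ℂ) (t : ℝ) :
    HasDerivAt (fun τ : ℝ => exp (τ * L)) (L * exp (t * L)) t :=
  ((hasDerivAt_ofReal_id t).mul_const L).cexp.congr_deriv (by ring)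

theorem hasDerivAt_cexp_neg_mul (hz : HasDerivAt z (f t / (f t - 1)) t) (hf1 : f t ≠ 1) :
    HasDerivAt (fun τ => exp (-z τ * L)) (L * f t / (1 - f t) * exp (-z t * L)) t := by
  have hexp : HasDerivAt (fun τ => -z τ * L) (-(f t / (f t - 1)) * L) t := hz.neg.mul_const L
  refine hexp.cexp.congr_deriv ?_
  have : f t - 1 ≠ 0 := sub_ne_zero.mpr hf1
  field_simp
  ring

theorem hasDerivAt_cexp_sub_mul (hz : HasDerivAt z (f t / (f t - 1)) t) (hf1 : f t ≠ 1) :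
    HasDerivAt (fun τ => exp ((z τ - τ) * L)) (-L / (1 - f t) * exp ((z t - t) * L)) t := by
  have hexp : HasDerivAt (fun τ => (z τ - τ) * L) ((f t / (f t - 1) - 1) * L) t :=
    (hz.sub (hasDerivAt_ofReal_id t)).mul_const L
  refine hexp.cexp.congr_deriv ?_
  have : f t - 1 ≠ 0 := sub_ne_zero.mpr hf1
  field_simp
  ring

theorem hasDerivAt_firstIntegral_U (hz : HasDerivAt z (f t / (f t - 1)) t)
    (hf : HasDerivAt f (L * f t * (κ ^ 2 * exp ((z t - t) * L) + exp (-z t * L)) /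
      (κ ^ 2 * exp ((z t - t) * L) - exp (-z t * L))) t)
    (hf1 : f t ≠ 1) (hden : κ ^ 2 * exp ((z t - t) * L) ≠ exp (-z t * L)) :
    HasDerivAt (fun τ : ℝ => exp (τ * L) *
      (f τ * exp (-z τ * L) - κ ^ 2 * exp ((z τ - τ) * L)) / (1 - f τ)) 0 t := by
  have hD : (1 : ℂ) - f t ≠ 0 := sub_ne_zero.mpr (Ne.symm hf1)
  have hab : κ ^ 2 * exp ((z t - t) * L) - exp (-z t * L) ≠ 0 := sub_ne_zero.mpr hden
  refine HasDerivAt.div_eq_zero_of_mul_eq ((hasDerivAt_cexp_ofReal_mul L t).mul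
    ((hf.mul (hasDerivAt_cexp_neg_mul hz hf1)).sub
      ((hasDerivAt_cexp_sub_mul hz hf1).const_mul _))) ((hasDerivAt_const t 1).sub hf) hD ?_
  generalize exp ((z t - t) * L) = a at *
  generalize exp (-z t * L) = b at *
  field_simp
  ring

theorem hasDerivAt_firstIntegral_V (hz : HasDerivAt z (f t / (f t - 1)) t)
    (hf : HasDerivAt f (L * f t * (κ ^ 2 * exp ((z t - t) * L) + exp (-z t * L)) /
      (κ ^ 2 * exp ((z t - t) * L) - exp (-z t * L))) t)
    (hf1 : f t ≠ 1) (hden : κ ^ 2 * exp ((z t - t) * L) ≠ exp (-z t * L)) :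
    HasDerivAt (fun τ : ℝ =>
      (exp (-z τ * L) - f τ * κ ^ 2 * exp ((z τ - τ) * L)) / (1 - f τ)) 0 t := by
  have hD : (1 : ℂ) - f t ≠ 0 := sub_ne_zero.mpr (Ne.symm hf1)
  have hab : κ ^ 2 * exp ((z t - t) * L) - exp (-z t * L) ≠ 0 := sub_ne_zero.mpr hden
  refine HasDerivAt.div_eq_zero_of_mul_eq ((hasDerivAt_cexp_neg_mul hz hf1).sub
    ((hf.mul_const _).mul (hasDerivAt_cexp_sub_mul hz hf1))) ((hasDerivAt_const t 1).sub hf) hD ?_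
  generalize exp ((z t - t) * L) = a at *
  generalize exp (-z t * L) = b at *
  field_simp
  ring

end CharacteristicFlow

theorem characteristic_flow_first_integrals_general (q : ℝ) (κ : ℂ)
    (s : Set ℝ) (z f : ℝ → ℂ)
    (hz : ∀ t ∈ s, HasDerivAt z (f t / (f t - 1)) t)
    (hf : ∀ t ∈ s, HasDerivAt f
      ((Real.log q : ℂ) * f t *
          (κ ^ 2 * Complex.exp ((z t - (t : ℂ)) * Real.log q) +
            Complex.exp (-z t * Real.log q)) /
        (κ ^ 2 * Complex.exp ((z t - (t : ℂ)) * Real.log q) -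
          Complex.exp (-z t * Real.log q))) t)
    (hf1 : ∀ t ∈ s, f t ≠ 1)
    (hden : ∀ t ∈ s, κ ^ 2 * Complex.exp ((z t - (t : ℂ)) * Real.log q)
      ≠ Complex.exp (-z t * Real.log q)) :
    ∀ t ∈ s,
      HasDerivAt (fun τ : ℝ => Complex.exp ((τ : ℂ) * Real.log q) *
          (f τ * Complex.exp (-z τ * Real.log q) -
            κ ^ 2 * Complex.exp ((z τ - (τ : ℂ)) * Real.log q)) /
          (1 - f τ)) 0 t ∧
      HasDerivAt (fun τ : ℝ =>
          (Complex.exp (-z τ * Real.log q) -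
            f τ * κ ^ 2 * Complex.exp ((z τ - (τ : ℂ)) * Real.log q)) /
          (1 - f τ)) 0 t := fun t ht =>
  ⟨hasDerivAt_firstIntegral_U (hz t ht) (hf t ht) (hf1 t ht) (hden t ht),
    hasDerivAt_firstIntegral_V (hz t ht) (hf t ht) (hf1 t ht) (hden t ht)⟩

/-- the two first integrals of the characteristic flow.  If
`z'(t) = f(t)/(f(t)−1)` and
`f'(t) = ln(q)·f(t)·(κ² q^{z(t)−t} + q^{−z(t)})/(κ² q^{z(t)−t} − q^{−z(t)})`,
with `f(t) ≠ 1` and `κ² q^{z(t)−t} ≠ q^{−z(t)}` throughout, then both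
`U(t) = q^t (f q^{−z} − κ² q^{z−t})/(1−f)` and
`V(t) = (q^{−z} − f κ² q^{z−t})/(1−f)` have zero derivative (here
`q^w := exp(w ln q)`). -/
theorem characteristic_flow_first_integrals (q : ℝ) (hq : 0 < q) (κ : ℂ) (hκ : κ ≠ 0)
    (s : Set ℝ) (z f : ℝ → ℂ)
    (hz : ∀ t ∈ s, HasDerivAt z (f t / (f t - 1)) t)
    (hf : ∀ t ∈ s, HasDerivAt f
      ((Real.log q : ℂ) * f t *
          (κ ^ 2 * Complex.exp ((z t - (t : ℂ)) * Real.log q) +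
            Complex.exp (-z t * Real.log q)) /
        (κ ^ 2 * Complex.exp ((z t - (t : ℂ)) * Real.log q) -
          Complex.exp (-z t * Real.log q))) t)
    (hf1 : ∀ t ∈ s, f t ≠ 1)
    (hden : ∀ t ∈ s, κ ^ 2 * Complex.exp ((z t - (t : ℂ)) * Real.log q)
      ≠ Complex.exp (-z t * Real.log q)) :
    ∀ t ∈ s,
      HasDerivAt (fun τ : ℝ => Complex.exp ((τ : ℂ) * Real.log q) *
          (f τ * Complex.exp (-z τ * Real.log q) -
            κ ^ 2 * Complex.exp ((z τ - (τ : ℂ)) * Real.log q)) /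
          (1 - f τ)) 0 t ∧
      HasDerivAt (fun τ : ℝ =>
          (Complex.exp (-z τ * Real.log q) -
            f τ * κ ^ 2 * Complex.exp ((z τ - (τ : ℂ)) * Real.log q)) /
          (1 - f τ)) 0 t :=
  characteristic_flow_first_integrals_general q κ s z f hz hf hf1 hden
end

section
/- Let ω₋ and ω₊ be positively oriented simple closed contours in an open set Λ ⊂ ℂ, both enclosing a compact set K, with ω₋ strictly inside ω₊, and let b : Λ → ℂ be holomorphic and injective, and g : Λ∖K → ℂ holomorphic. Then for every z in the open annulus between ω₋ and ω₊, g(z) = (1/2πi) ∮_{ω₊} g(w) b'(w)/(b(w) − b(z)) dw − (1/2πi) ∮_{ω₋} g(w) b'(w)/(b(w) − b(z)) dw. -/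
/-!
Since `b` is injective, `b'` does not vanish on `Λ`, so `b w - b z = (w - z) q(w)` with `q`
holomorphic and zero-free on `Λ`. Hence `g(w) b'(w) / (b(w) - b(z)) = g(z) / (w - z) + φ(w)` with
`φ` holomorphic on `Λ ∖ K`. The two circles are homotopic through circles in the closed annulus
between them, so Cauchy's theorem (via the divergence theorem on the linear homotopy) gives the
same integral of `φ` over both, while `∮ (w - z)⁻¹` is `2πi` over `ω₊` and `0` over `ω₋`.
-/

open Complex Metric Set Filter Topology MeasureTheory
open scoped Real

theorem AnalyticAt.exists_pow_eq {u : ℂ → ℂ} {z : ℂ} (hu : AnalyticAt ℂ u z) (hz : u z ≠ 0)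
    {n : ℕ} (hn : n ≠ 0) : ∃ ψ : ℂ → ℂ, AnalyticAt ℂ ψ z ∧ ψ z ≠ 0 ∧ ∀ w, ψ w ^ n = u w := by
  refine ⟨fun w ↦ u z ^ (n⁻¹ : ℂ) * (u w / u z) ^ (n⁻¹ : ℂ), ?_, ?_, fun w ↦ ?_⟩
  · refine analyticAt_const.mul ((hu.div analyticAt_const hz).cpow analyticAt_const ?_)
    simp [hz]
  · simp [hz, hn]
  · rw [mul_pow, cpow_nat_inv_pow _ hn, cpow_nat_inv_pow _ hn, mul_div_cancel₀ _ hz]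

theorem HasStrictDerivAt.not_injOn_pow {h : ℂ → ℂ} {h' z : ℂ} (hh : HasStrictDerivAt h h' z)
    (hh' : h' ≠ 0) (hz : h z = 0) {n : ℕ} (hn : 2 ≤ n) {s : Set ℂ} (hs : s ∈ 𝓝 z) :
    ¬ InjOn (fun w ↦ h w ^ n) s := by
  intro hinj
  obtain ⟨ω, hω⟩ : ∃ ω : ℂ, IsPrimitiveRoot ω n := ⟨_, isPrimitiveRoot_exp n (by omega)⟩
  have himage : h '' s ∈ 𝓝 0 := by
    rw [← hz, ← hh.map_nhds_eq hh']
    exact image_mem_map hs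
  have hrot : Tendsto (ω * ·) (𝓝 0) (𝓝 0) := by
    simpa using (continuous_const_mul ω).tendsto 0
  have hζ : ∀ᶠ ζ in 𝓝[≠] (0 : ℂ), ζ ∈ h '' s := nhdsWithin_le_nhds himage
  have hωζ : ∀ᶠ ζ in 𝓝[≠] (0 : ℂ), ω * ζ ∈ h '' s := nhdsWithin_le_nhds (hrot himage)
  obtain ⟨_, ⟨w₁, hw₁, rfl⟩, ⟨w₂, hw₂, hw₂₁⟩, hw₁0⟩ :=
    (hζ.and (hωζ.and self_mem_nhdsWithin)).exists
  have hpow : h w₂ ^ n = h w₁ ^ n := by rw [hw₂₁, mul_pow, hω.pow_eq_one, one_mul]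
  rw [hinj hw₂ hw₁ hpow] at hw₂₁
  exact hω.ne_one (by omega) ((mul_eq_right₀ hw₁0).mp hw₂₁.symm)

theorem AnalyticAt.deriv_ne_zero_of_injOn {f : ℂ → ℂ} {z : ℂ} (hf : AnalyticAt ℂ f z)
    {s : Set ℂ} (hs : s ∈ 𝓝 z) (hinj : InjOn f s) : deriv f z ≠ 0 := by
  intro hf'
  have hord : analyticOrderAt (f · - f z) z ≠ ⊤ := by
    intro htop
    obtain ⟨w, ⟨hwz, hws⟩, hw⟩ := ((analyticOrderAt_eq_top.mp htop).and hs
      |>.filter_mono nhdsWithin_le_nhds |>.and (self_mem_nhdsWithin : ∀ᶠ w in 𝓝[≠] z, w ≠ z)).exists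
    exact hw (hinj hws (mem_of_mem_nhds hs) (sub_eq_zero.mp hwz))
  obtain ⟨n, hn⟩ := ENat.ne_top_iff_exists.mp hord
  have hn2 : 2 ≤ n := by
    have hderiv : analyticOrderAt (deriv f) z ≠ 0 := analyticOrderAt_ne_zero.mpr ⟨hf.deriv, hf'⟩
    have : (2 : ℕ∞) ≤ n := by
      rw [hn, ← hf.analyticOrderAt_deriv_add_one, ← one_add_one_eq_two]
      gcongr
      exact Order.one_le_iff_ne_zero.mpr hderiv
    exact_mod_cast this
  obtain ⟨u, hu, huz, hfu⟩ :=
    (AnalyticAt.analyticOrderAt_eq_natCast (f := (f · - f z)) (by fun_prop)).mp hn.symm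
  obtain ⟨ψ, hψ, hψz, hψu⟩ := hu.exists_pow_eq huz (n := n) (by omega)
  have hcoord : HasStrictDerivAt (fun w ↦ (w - z) * ψ w) (ψ z) z := by
    simpa using HasStrictDerivAt.fun_mul ((hasStrictDerivAt_id z).sub_const z) hψ.hasStrictDerivAt
  refine hcoord.not_injOn_pow hψz (by simp) hn2 (inter_mem hs hfu) ?_
  rintro w₁ ⟨hw₁, hfw₁⟩ w₂ ⟨hw₂, hfw₂⟩ heq
  apply hinj hw₁ hw₂
  simp only [mem_ofPred_eq, smul_eq_mul, ← hψu] at hfw₁ hfw₂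
  simp only [mul_pow] at heq
  linear_combination hfw₁ - hfw₂ + heq

theorem exists_deriv_div_sub_eq_inv_add {U : Set ℂ} (hU : IsOpen U) {b : ℂ → ℂ}
    (hb : DifferentiableOn ℂ b U) (hinj : InjOn b U) {z : ℂ} (hz : z ∈ U) :
    ∃ Ψ : ℂ → ℂ, DifferentiableOn ℂ Ψ U ∧
      ∀ w ∈ U, w ≠ z → deriv b w / (b w - b z) = (w - z)⁻¹ + Ψ w := by
  set q := dslope b z
  have hq : DifferentiableOn ℂ q U := (differentiableOn_dslope (hU.mem_nhds hz)).mpr hb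
  have hfac (w : ℂ) : b w - b z = (w - z) * q w := by rw [← smul_eq_mul, sub_smul_dslope]
  have hbq : b = fun w ↦ b z + (w - z) * q w := funext fun w ↦ by rw [← hfac]; ring
  have hq_ne : ∀ w ∈ U, q w ≠ 0 := by
    intro w hw
    rcases eq_or_ne w z with rfl | hwz
    · simp only [q, dslope_same]
      exact ((hb.analyticOnNhd hU) w hw).deriv_ne_zero_of_injOn (hU.mem_nhds hw) hinj
    · intro hqw
      refine hwz (hinj hw hz (sub_eq_zero.mp ?_))
      rw [hfac, hqw, mul_zero]
  refine ⟨fun w ↦ deriv q w / q w, ?_, fun w hw hwz ↦ ?_⟩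
  · exact (hq.deriv hU).div hq hq_ne
  · have hderiv : HasDerivAt b (q w + (w - z) * deriv q w) w := by
      rw [hbq]
      simpa using (((hasDerivAt_id w).sub_const z).mul
        (hq.differentiableAt (hU.mem_nhds hw)).hasDerivAt).const_add (b z)
    rw [hderiv.deriv, hfac]
    field_simp [sub_ne_zero.mpr hwz, hq_ne w hw]

theorem exists_mul_deriv_div_sub_eq_mul_inv_add {U V : Set ℂ} (hU : IsOpen U) (hV : IsOpen V)
    (hVU : V ⊆ U) {b g : ℂ → ℂ} (hb : DifferentiableOn ℂ b U) (hinj : InjOn b U)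
    (hg : DifferentiableOn ℂ g V) {z : ℂ} (hz : z ∈ V) :
    ∃ φ : ℂ → ℂ, DifferentiableOn ℂ φ V ∧
      ∀ w ∈ V, w ≠ z → g w * deriv b w / (b w - b z) = g z * (w - z)⁻¹ + φ w := by
  obtain ⟨Ψ, hΨ, hlog⟩ := exists_deriv_div_sub_eq_inv_add hU hb hinj (hVU hz)
  refine ⟨fun w ↦ dslope g z w + g w * Ψ w,
    ((differentiableOn_dslope (hV.mem_nhds hz)).mpr hg).add (hg.mul (hΨ.mono hVU)),
    fun w hw hwz ↦ ?_⟩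
  simp only [mul_div_assoc, hlog w (hVU hw) hwz, dslope_of_ne _ hwz, slope_def_field]
  field_simp [sub_ne_zero.mpr hwz]
  ring

theorem dist_add_lt_of_closedBall_subset_ball {c₁ c₂ : ℂ} {r₁ r₂ : ℝ} (hr₁ : 0 ≤ r₁)
    (h : closedBall c₁ r₁ ⊆ ball c₂ r₂) : dist c₁ c₂ + r₁ < r₂ := by
  set u := exp ((c₁ - c₂).arg * I)
  have hu : ‖u‖ = 1 := norm_exp_ofReal_mul_I _
  have hmem : c₁ + r₁ * u ∈ closedBall c₁ r₁ := by
    simp [hu, abs_of_nonneg hr₁]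
  have hdist : dist (c₁ + r₁ * u) c₂ = dist c₁ c₂ + r₁ := by
    rw [dist_eq_norm, dist_eq_norm, show c₁ + r₁ * u - c₂ = ((‖c₁ - c₂‖ + r₁ : ℝ) : ℂ) * u by
      push_cast; rw [add_mul, norm_mul_exp_arg_mul_I]; ring]
    rw [norm_mul, hu, mul_one, norm_real, Real.norm_of_nonneg (by positivity)]
  simpa [hdist] using h hmem

theorem sphere_subset_closedBall_diff_ball_of_mem_Icc {c₁ c₂ : ℂ} {r₁ r₂ : ℝ}
    (h : dist c₁ c₂ + r₁ ≤ r₂) {t : ℝ} (ht : t ∈ Icc (0 : ℝ) 1) :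
    sphere (c₁ + t * (c₂ - c₁)) (r₁ + t * (r₂ - r₁)) ⊆ closedBall c₂ r₂ \ ball c₁ r₁ := by
  intro w hw
  rw [mem_sphere] at hw
  have hc₁ : dist (c₁ + t * (c₂ - c₁)) c₁ = t * dist c₁ c₂ := by
    rw [dist_eq_norm, add_sub_cancel_left, norm_mul, norm_real, Real.norm_of_nonneg ht.1,
      dist_comm, dist_eq_norm]
  have hc₂ : dist (c₁ + t * (c₂ - c₁)) c₂ = (1 - t) * dist c₁ c₂ := by
    rw [dist_eq_norm,
      show c₁ + t * (c₂ - c₁) - c₂ = ((1 - t : ℝ) : ℂ) * (c₁ - c₂) by push_cast; ring,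
      norm_mul, norm_real, Real.norm_of_nonneg (sub_nonneg.mpr ht.2), dist_eq_norm]
  have hd := dist_nonneg (x := c₁) (y := c₂)
  refine ⟨?_, fun hw₁ ↦ ?_⟩
  · have := dist_triangle w (c₁ + t * (c₂ - c₁)) c₂
    rw [mem_closedBall]
    nlinarith [ht.1, ht.2]
  · have := dist_triangle w c₁ (c₁ + t * (c₂ - c₁))
    rw [mem_ball] at hw₁
    rw [dist_comm c₁] at this
    nlinarith [ht.1, ht.2]

theorem HasDerivAt.circleMap {c : ℝ → ℂ} {R : ℝ → ℝ} {c' : ℂ} {R' t : ℝ} (hc : HasDerivAt c c' t)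
    (hR : HasDerivAt R R' t) (θ : ℝ) :
    HasDerivAt (fun t ↦ circleMap (c t) (R t) θ) (c' + circleMap 0 R' θ) t := by
  simpa [_root_.circleMap] using hc.fun_add (hR.ofReal_comp.mul_const (Complex.exp (θ * I)))

section PartialDerivatives

variable {E : Type*} [NormedAddCommGroup E] [NormedSpace ℝ E] {Φ : ℝ × ℝ → E}
  {Φ' : ℝ × ℝ →L[ℝ] E} {t θ : ℝ} {a : E}

theorem HasFDerivAt.apply_one_zero (hΦ : HasFDerivAt Φ Φ' (t, θ))
    (ha : HasDerivAt (fun s ↦ Φ (s, θ)) a t) : Φ' (1, 0) = a :=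
  (hΦ.comp_hasDerivAt t ((hasDerivAt_id t).prodMk (hasDerivAt_const t θ))).unique ha

theorem HasFDerivAt.apply_zero_one (hΦ : HasFDerivAt Φ Φ' (t, θ))
    (ha : HasDerivAt (fun s ↦ Φ (t, s)) a θ) : Φ' (0, 1) = a :=
  (hΦ.comp_hasDerivAt θ ((hasDerivAt_const θ t).prodMk (hasDerivAt_id θ))).unique ha

end PartialDerivatives

theorem intervalIntegral_eq_of_fderiv_eq_of_periodic {E : Type*} [NormedAddCommGroup E]
    [NormedSpace ℝ E] {F G : ℝ × ℝ → E} {a b : ℝ × ℝ} (hab : a ≤ b)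
    (hF : ∀ p ∈ Icc a b, DifferentiableAt ℝ F p) (hG : ∀ p ∈ Icc a b, DifferentiableAt ℝ G p)
    (hFG : ∀ p ∈ Icc a b, fderiv ℝ F p (1, 0) = fderiv ℝ G p (0, 1))
    (hper : ∀ t, G (t, b.2) = G (t, a.2)) :
    ∫ θ in a.2..b.2, F (b.1, θ) = ∫ θ in a.2..b.2, F (a.1, θ) := by
  have hzero : EqOn (fun p ↦ fderiv ℝ F p (1, 0) + (-fderiv ℝ G p) (0, 1)) 0 (Icc a b) :=
    fun p hp ↦ by simp [hFG p hp]
  have hinterior : Ioo a.1 b.1 ×ˢ Ioo a.2 b.2 ⊆ Icc a b :=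
    fun p hp ↦ ⟨⟨hp.1.1.le, hp.2.1.le⟩, ⟨hp.1.2.le, hp.2.2.le⟩⟩
  have key := integral_divergence_prod_Icc_of_hasFDerivAt_off_countable_of_le F (fun p ↦ -G p)
    (fderiv ℝ F) (fun p ↦ -fderiv ℝ G p) a b hab ∅ countable_empty
    (fun p hp ↦ (hF p hp).continuousAt.continuousWithinAt)
    (fun p hp ↦ (hG p hp).continuousAt.neg.continuousWithinAt)
    (fun p hp ↦ (hF p (hinterior hp.1)).hasFDerivAt)
    (fun p hp ↦ (hG p (hinterior hp.1)).hasFDerivAt.neg)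
    (integrableOn_zero.congr_fun hzero.symm measurableSet_Icc)
  rw [setIntegral_congr_fun measurableSet_Icc hzero] at key
  simp only [hper, Pi.zero_apply, integral_zero, sub_self, zero_add] at key
  exact (sub_eq_zero.mp key.symm)

theorem circleIntegral_eq_of_differentiableAt_closedBall_diff_ball {E : Type*}
    [NormedAddCommGroup E] [NormedSpace ℂ E] {c₁ c₂ : ℂ} {r₁ r₂ : ℝ} (hr₁ : 0 ≤ r₁)
    (h : dist c₁ c₂ + r₁ ≤ r₂) {f : ℂ → E}
    (hf : ∀ w ∈ closedBall c₂ r₂ \ ball c₁ r₁, DifferentiableAt ℂ f w) :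
    (∮ w in C(c₂, r₂), f w) = ∮ w in C(c₁, r₁), f w := by
  have hc (t : ℝ) : HasDerivAt (fun t : ℝ ↦ c₁ + t * (c₂ - c₁)) (c₂ - c₁) t := by
    simpa using (hasDerivAt_id t).ofReal_comp.mul_const (c₂ - c₁)
  have hr (t : ℝ) : HasDerivAt (fun t ↦ r₁ + t * (r₂ - r₁)) (r₂ - r₁) t := by
    simpa using (hasDerivAt_id t).mul_const (r₂ - r₁)
  set c : ℝ → ℂ := fun t ↦ c₁ + t * (c₂ - c₁)
  set r : ℝ → ℝ := fun t ↦ r₁ + t * (r₂ - r₁)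
  set γ : ℝ × ℝ → ℂ := fun p ↦ circleMap (c p.1) (r p.1) p.2
  -- `F` and `G` are `f ∘ γ` times `∂γ/∂θ` and `∂γ/∂t`
  set F : ℝ × ℝ → E := fun p ↦ (circleMap 0 (r p.1) p.2 * I) • f (γ p)
  set G : ℝ × ℝ → E := fun p ↦ ((c₂ - c₁) + circleMap 0 (r₂ - r₁) p.2) • f (γ p)
  set box := Icc ((0 : ℝ), (0 : ℝ)) (1, 2 * π)
  have hγ (p : ℝ × ℝ) (hp : p ∈ box) : γ p ∈ closedBall c₂ r₂ \ ball c₁ r₁ :=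
    sphere_subset_closedBall_diff_ball_of_mem_Icc h ⟨hp.1.1, hp.2.1⟩ (circleMap_mem_sphere _
      (by nlinarith [hp.1.1, hp.2.1, dist_nonneg (x := c₁) (y := c₂)]) _)
  have hfγ (p : ℝ × ℝ) (hp : p ∈ box) : DifferentiableAt ℝ (fun q ↦ f (γ q)) p :=
    ((hf _ (hγ p hp)).restrictScalars ℝ).comp p (by simp only [γ, c, r, circleMap]; fun_prop)
  have hF (p : ℝ × ℝ) (hp : p ∈ box) : DifferentiableAt ℝ F p :=
    (by simp only [r, circleMap]; fun_prop : DifferentiableAt ℝ _ p).smul (hfγ p hp)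
  have hG (p : ℝ × ℝ) (hp : p ∈ box) : DifferentiableAt ℝ G p :=
    (by simp only [circleMap]; fun_prop : DifferentiableAt ℝ _ p).smul (hfγ p hp)
  have hFG (p : ℝ × ℝ) (hp : p ∈ box) : fderiv ℝ F p (1, 0) = fderiv ℝ G p (0, 1) := by
    obtain ⟨t, θ⟩ := p
    have hf' := (hf _ (hγ _ hp)).hasDerivAt
    rw [(hF _ hp).hasFDerivAt.apply_one_zero
        ((((hasDerivAt_const t (0 : ℂ)).circleMap (hr t) θ).mul_const I).smul
          (hf'.scomp t ((hc t).circleMap (hr t) θ))),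
      (hG _ hp).hasFDerivAt.apply_zero_one
        (((hasDerivAt_circleMap 0 (r₂ - r₁) θ).const_add (c₂ - c₁)).smul
          (hf'.scomp θ (hasDerivAt_circleMap (c t) (r t) θ)))]
    simp only [zero_add, smul_smul, mul_comm (circleMap 0 (r t) θ * I)]
  have key := intervalIntegral_eq_of_fderiv_eq_of_periodic ⟨zero_le_one, by positivity⟩ hF hG hFG
    fun t ↦ by simp only [G, γ, (periodic_circleMap _ _).eq]
  simpa [circleIntegral, F, γ, c, r] using key

theorem circleIntegral_sub_inv_of_notMem_closedBall {c z : ℂ} {R : ℝ} (hR : 0 ≤ R)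
    (hz : z ∉ closedBall c R) : (∮ w in C(c, R), (w - z)⁻¹) = 0 :=
  DiffContOnCl.circleIntegral_eq_zero hR
    (((differentiableOn_id.sub_const z).inv fun _ hw ↦ sub_ne_zero.mpr hw).diffContOnCl_ball
      fun _ hw h ↦ hz (h ▸ hw))

theorem circleIntegral_eq_mul_circleIntegral_sub_inv_add {F φ : ℂ → ℂ} {c z a : ℂ} {R : ℝ}
    (hR : 0 ≤ R) (hz : z ∉ sphere c R) (hφ : ContinuousOn φ (sphere c R))
    (hF : EqOn F (fun w ↦ a * (w - z)⁻¹ + φ w) (sphere c R)) :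
    (∮ w in C(c, R), F w) = a * (∮ w in C(c, R), (w - z)⁻¹) + ∮ w in C(c, R), φ w := by
  have hinv : ContinuousOn (fun w ↦ (w - z)⁻¹) (sphere c R) :=
    (continuousOn_id.sub continuousOn_const).inv₀ fun w hw ↦
      sub_ne_zero.mpr (ne_of_mem_of_not_mem hw hz)
  rw [circleIntegral.integral_congr hR hF, circleIntegral.integral_add
    (f := fun w ↦ a * (w - z)⁻¹) ((continuousOn_const.mul hinv).circleIntegrable hR)
    (hφ.circleIntegrable hR), circleIntegral.integral_const_mul]

/-- the Wiener–Hopf-type decomposition.  For two positively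
oriented circles (the contours `ω₋ = C(c₁,r₁)` and `ω₊ = C(c₂,r₂)`) inside an
open set `Λ`, both enclosing a compact set `K`, with `ω₋` strictly inside
`ω₊`, `b` holomorphic and injective on `Λ`, and `g` holomorphic on `Λ ∖ K`,
for every `z` in the open annulus between the two contours:
`g(z) = (1/2πi) ∮_{ω₊} g(w) b'(w)/(b(w) − b(z)) dw
      − (1/2πi) ∮_{ω₋} g(w) b'(w)/(b(w) − b(z)) dw`. -/
theorem wiener_hopf_decomposition (Λ : Set ℂ) (hΛ : IsOpen Λ) (K : Set ℂ)
    (hK : IsCompact K) (c₁ c₂ : ℂ) (r₁ r₂ : ℝ) (hr₁ : 0 < r₁) (hr₂ : 0 < r₂)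
    (hsub : Metric.closedBall c₁ r₁ ⊆ Metric.ball c₂ r₂)
    (hK₁ : K ⊆ Metric.ball c₁ r₁)
    (hΛ₂ : Metric.closedBall c₂ r₂ ⊆ Λ)
    (b : ℂ → ℂ) (hb : DifferentiableOn ℂ b Λ) (hbinj : Set.InjOn b Λ)
    (g : ℂ → ℂ) (hg : DifferentiableOn ℂ g (Λ \ K)) :
    ∀ z ∈ Metric.ball c₂ r₂ \ Metric.closedBall c₁ r₁,
      g z = (1 / (2 * (Real.pi : ℂ) * Complex.I)) *
              (∮ w in C(c₂, r₂), g w * deriv b w / (b w - b z))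
          - (1 / (2 * (Real.pi : ℂ) * Complex.I)) *
              (∮ w in C(c₁, r₁), g w * deriv b w / (b w - b z)) := by
  rintro z ⟨hz₂, hz₁⟩
  have hdist := (dist_add_lt_of_closedBall_subset_ball hr₁.le hsub).le
  have hsphere {t : ℝ} (ht : t ∈ Icc (0 : ℝ) 1) :=
    sphere_subset_closedBall_diff_ball_of_mem_Icc hdist ht
  have hΛK : IsOpen (Λ \ K) := hΛ.sdiff hK.isClosed
  have hannulus : closedBall c₂ r₂ \ ball c₁ r₁ ⊆ Λ \ K :=
    fun w hw ↦ ⟨hΛ₂ hw.1, fun hwK ↦ hw.2 (hK₁ hwK)⟩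
  obtain ⟨φ, hφ, hsplit⟩ := exists_mul_deriv_div_sub_eq_mul_inv_add hΛ hΛK sdiff_subset hb hbinj
    hg (hannulus ⟨ball_subset_closedBall hz₂, fun h ↦ hz₁ (ball_subset_closedBall h)⟩)
  have hcircle (c : ℂ) (R : ℝ) (hR : 0 ≤ R) (hsph : sphere c R ⊆ closedBall c₂ r₂ \ ball c₁ r₁)
      (hz : z ∉ sphere c R) :
      (∮ w in C(c, R), g w * deriv b w / (b w - b z)) =
        g z * (∮ w in C(c, R), (w - z)⁻¹) + ∮ w in C(c, R), φ w :=
    circleIntegral_eq_mul_circleIntegral_sub_inv_add hR hz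
      (hφ.continuousOn.mono (hsph.trans hannulus))
      fun w hw ↦ hsplit w (hannulus (hsph hw)) (ne_of_mem_of_not_mem hw hz)
  rw [hcircle c₂ r₂ hr₂.le (by simpa using hsphere (right_mem_Icc.mpr zero_le_one))
      fun h ↦ (mem_ball.mp hz₂).ne (mem_sphere.mp h),
    hcircle c₁ r₁ hr₁.le (by simpa using hsphere (left_mem_Icc.mpr zero_le_one))
      fun h ↦ hz₁ (sphere_subset_closedBall h),
    circleIntegral.integral_sub_inv_of_mem_ball hz₂,
    circleIntegral_sub_inv_of_notMem_closedBall hr₁.le hz₁,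
    circleIntegral_eq_of_differentiableAt_closedBall_diff_ball hr₁.le hdist
      fun w hw ↦ hφ.differentiableAt (hΛK.mem_nhds (hannulus hw))]
  field_simp
  ring
end

section
/- Let b be holomorphic and injective on a neighborhood of a positively oriented simple closed contour γ and its interior, with b' nonvanishing there, let w be a point strictly inside γ, and let f be holomorphic on a neighborhood of γ and its interior. Then (1/2πi) ∮_γ f(u) b'(u)/(b(w) − b(u))² du = f'(w)/b'(w). -/
/-!
Write `b u - b w = (u - w) • d u` with `d = dslope b w`, which is holomorphic and, by injectivity
of `b` and `b' w ≠ 0`, nowhere zero. Integrating by parts on the circle turns the integrand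
`f b' / (b w - b)²` into `f' / (b - b w) = (u - w)⁻¹ • (f' / d)`, and the Cauchy integral formula
evaluates this at `w` as `f' w / d w = f' w / b' w`.
-/

open Complex Metric Set

theorem dslope_ne_zero_of_injOn {𝕜 E : Type*} [NontriviallyNormedField 𝕜] [NormedAddCommGroup E]
    [NormedSpace 𝕜 E] {b : 𝕜 → E} {s : Set 𝕜} {w u : 𝕜} (hinj : InjOn b s) (hw : w ∈ s)
    (hu : u ∈ s) (hb' : deriv b w ≠ 0) : dslope b w u ≠ 0 := by
  rcases eq_or_ne u w with rfl | hne
  · rwa [dslope_same]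
  · rw [dslope_of_ne _ hne, slope, vsub_eq_sub]
    exact smul_ne_zero (inv_ne_zero (sub_ne_zero.2 hne)) (sub_ne_zero.2 (hinj.ne hu hw hne))

theorem HasDerivAt.div_const_sub {𝕜 : Type*} [NontriviallyNormedField 𝕜] {f b : 𝕜 → 𝕜}
    {f' b' a z : 𝕜} (hf : HasDerivAt f f' z) (hb : HasDerivAt b b' z) (ha : a - b z ≠ 0) :
    HasDerivAt (fun u => f u / (a - b u)) (f' / (a - b z) + f z * b' / (a - b z) ^ 2) z := by
  refine (hf.div (hb.const_sub a) ha).congr_deriv ?_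
  field_simp
  ring

theorem circleIntegral_eq_of_hasDerivWithinAt_sub {E : Type*} [NormedAddCommGroup E]
    [NormedSpace ℂ E] [CompleteSpace E] {h g F : ℂ → E} {c : ℂ} {R : ℝ} (hR : 0 ≤ R)
    (hh : CircleIntegrable h c R) (hg : CircleIntegrable g c R)
    (hF : ∀ z ∈ sphere c R, HasDerivWithinAt F (h z - g z) (sphere c R) z) :
    (∮ z in C(c, R), h z) = ∮ z in C(c, R), g z := by
  rw [← sub_eq_zero, ← circleIntegral.integral_sub hh hg]
  exact circleIntegral.integral_eq_zero_of_hasDerivWithinAt hR hF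

-- `f b' / (a - b)² = (f / (a - b))' - f' / (a - b)`
theorem circleIntegral_mul_deriv_div_sub_sq {c a : ℂ} {R : ℝ} {V : Set ℂ} {f b : ℂ → ℂ}
    (hR : 0 ≤ R) (hV : IsOpen V) (hRV : sphere c R ⊆ V) (hf : DifferentiableOn ℂ f V)
    (hb : DifferentiableOn ℂ b V) (ha : ∀ z ∈ sphere c R, a - b z ≠ 0) :
    (∮ z in C(c, R), f z * deriv b z / (a - b z) ^ 2) = ∮ z in C(c, R), deriv f z / (b z - a) := by
  have hcont : ∀ {φ : ℂ → ℂ}, DifferentiableOn ℂ φ V → ContinuousOn φ (sphere c R) :=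
    fun hφ => hφ.continuousOn.mono hRV
  have hden : ContinuousOn (fun z => a - b z) (sphere c R) := continuousOn_const.sub (hcont hb)
  apply circleIntegral_eq_of_hasDerivWithinAt_sub hR (F := fun z => f z / (a - b z))
  · refine ContinuousOn.circleIntegrable hR ?_
    exact ((hcont hf).mul (hcont (hb.deriv hV))).div (hden.pow 2)
      fun z hz => pow_ne_zero 2 (ha z hz)
  · refine ContinuousOn.circleIntegrable hR ?_
    exact (hcont (hf.deriv hV)).div ((hcont hb).sub continuousOn_const)
      fun z hz => sub_ne_zero.2 (sub_ne_zero.1 (ha z hz)).symm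
  · intro z hz
    have hdiff : ∀ {φ : ℂ → ℂ}, DifferentiableOn ℂ φ V → HasDerivAt φ (deriv φ z) z :=
      fun hφ => (hφ.differentiableAt (hV.mem_nhds (hRV hz))).hasDerivAt
    refine ((hdiff hf).div_const_sub (hdiff hb) (ha z hz)).hasDerivWithinAt.congr_deriv ?_
    rw [← neg_sub a, div_neg, sub_neg_eq_add, add_comm]

theorem contour_integral_derivative_formula_general (c : ℂ) (r : ℝ)
    (V : Set ℂ) (hV : IsOpen V) (hVc : Metric.closedBall c r ⊆ V)
    (b f : ℂ → ℂ) (hb : DifferentiableOn ℂ b V) (hbinj : Set.InjOn b V)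
    (hb' : ∀ u ∈ V, deriv b u ≠ 0) (hf : DifferentiableOn ℂ f V)
    (w : ℂ) (hw : w ∈ Metric.ball c r) :
    (1 / (2 * (Real.pi : ℂ) * Complex.I)) *
        (∮ u in C(c, r), f u * deriv b u / (b w - b u) ^ 2)
      = deriv f w / deriv b w := by
  have hr : 0 ≤ r := dist_nonneg.trans (mem_ball.1 hw).le
  have hwV : w ∈ V := hVc (ball_subset_closedBall hw)
  have hsV : sphere c r ⊆ V := sphere_subset_closedBall.trans hVc
  have hsw : ∀ z ∈ sphere c r, z ≠ w := fun z hz h => (mem_ball.1 hw).ne (h ▸ mem_sphere.1 hz)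
  have hd0 : ∀ z ∈ V, dslope b w z ≠ 0 := fun z hz =>
    dslope_ne_zero_of_injOn hbinj hwV hz (hb' w hwV)
  have hquot : DiffContOnCl ℂ (fun z => deriv f z / dslope b w z) (ball c r) :=
    (((hf.deriv hV).div ((differentiableOn_dslope (hV.mem_nhds hwV)).2 hb) hd0).mono
      (closure_ball_subset_closedBall.trans hVc)).diffContOnCl
  have hslope : (fun z => deriv f z / (b z - b w)) =
      fun z => (z - w)⁻¹ • (deriv f z / dslope b w z) := by
    ext z
    rw [← sub_smul_dslope b w z, smul_eq_mul, smul_eq_mul, div_mul_eq_div_div_swap, div_eq_inv_mul]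
  rw [circleIntegral_mul_deriv_div_sub_sq hr hV hsV hf hb
      fun z hz => sub_ne_zero.2 (hbinj.ne hwV (hsV hz) (hsw z hz).symm),
    hslope, one_div, ← smul_eq_mul,
    hquot.two_pi_i_inv_smul_circleIntegral_sub_inv_smul hw,
    dslope_same]

/-- for `b` holomorphic and injective with nonvanishing
derivative on a neighborhood `V` of the closed disk bounded by the positively
oriented contour `γ = C(c,r)`, `f` holomorphic on `V`, and `w` strictly
inside `γ`:
`(1/2πi) ∮_γ f(u) b'(u)/(b(w) − b(u))² du = f'(w)/b'(w)`. -/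
theorem contour_integral_derivative_formula (c : ℂ) (r : ℝ) (hr : 0 < r)
    (V : Set ℂ) (hV : IsOpen V) (hVc : Metric.closedBall c r ⊆ V)
    (b f : ℂ → ℂ) (hb : DifferentiableOn ℂ b V) (hbinj : Set.InjOn b V)
    (hb' : ∀ u ∈ V, deriv b u ≠ 0) (hf : DifferentiableOn ℂ f V)
    (w : ℂ) (hw : w ∈ Metric.ball c r) :
    (1 / (2 * (Real.pi : ℂ) * Complex.I)) *
        (∮ u in C(c, r), f u * deriv b u / (b w - b u) ^ 2)
      = deriv f w / deriv b w :=
  contour_integral_derivative_formula_general c r V hV hVc b f hb hbinj hb' hf w hw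
end
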